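/- Fix n ≥ 1 and let J be a maximal (for inclusion) adjacency-avoiding subset of I_n. Then: (i) ⟦1,n⟧ ∈ J; (ii) if K, L ∈ J with b(K) ≤ e(L), then ⟦b(K), e(L)⟧ ∈ J; (iii) if K, L ∈ J and K ∩ L ≠ ∅, then K ∩ L ∈ J. -/

import Mathlib

/-- `K` is an interval of `{1, …, n}`: a set `⟦i,j⟧ = {i, i+1, …, j}` with `1 ≤ i ≤ j ≤ n`. -/
def IsInterval (n : ℕ) (K : Set ℕ) : Prop :=
  ∃ i j, 1 ≤ i ∧ i ≤ j ∧ j ≤ n ∧ K = Set.Icc i j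

/-- The lower bound `b(K)` of an interval `K`. -/
noncomputable def intB (K : Set ℕ) : ℕ := sInf K

/-- The upper bound `e(K)` of an interval `K`. -/
noncomputable def intE (K : Set ℕ) : ℕ := sSup K

/-- `J(B, E)`: the set of intervals `K` of `{1, …, n}` with `b(K) ∈ B` and `e(K) ∈ E`. -/
def intervalsOf (n : ℕ) (B E : Set ℕ) : Set (Set ℕ) :=
  {K | IsInterval n K ∧ intB K ∈ B ∧ intE K ∈ E}

/-- Two intervals `K`, `L` are adjacent if `b(K) = e(L) + 1` or `b(L) = e(K) + 1`. -/
def Adjacent (K L : Set ℕ) : Prop :=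
  intB K = intE L + 1 ∨ intB L = intE K + 1

/-- An interval set is adjacency-avoiding if it contains no pair of adjacent intervals. -/
def AdjAvoiding (J : Set (Set ℕ)) : Prop :=
  ∀ K ∈ J, ∀ L ∈ J, ¬ Adjacent K L

/-- The shift `A[1] = {a + 1 : a ∈ A}` of a set of integers. -/
def shiftSet (A : Set ℕ) : Set ℕ := (· + 1) '' A

/- An interval is forced into a maximal adjacency-avoiding set `J` as soon as it is adjacent to
no member of `J`, since adding it would keep `J` adjacency-avoiding. For `⟦b(K), e(L)⟧` an
interval adjacent to it would already be adjacent to `K` or to `L`; `⟦1,n⟧` has no neighbours at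
all; and `K ∩ L` is the interval `⟦b(A), e(B)⟧` for suitable `A, B ∈ {K, L}`. -/

lemma intB_Icc {i j : ℕ} (h : i ≤ j) : intB (Set.Icc i j) = i :=
  csInf_Icc h

lemma intE_Icc {i j : ℕ} (h : i ≤ j) : intE (Set.Icc i j) = j :=
  csSup_Icc h

namespace IsInterval

variable {n : ℕ} {K L : Set ℕ}

lemma eq_Icc (h : IsInterval n K) : K = Set.Icc (intB K) (intE K) := by
  obtain ⟨i, j, -, hij, -, rfl⟩ := h
  rw [intB_Icc hij, intE_Icc hij]

lemma intB_le_intE (h : IsInterval n K) : intB K ≤ intE K := by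
  obtain ⟨i, j, -, hij, -, rfl⟩ := h
  rw [intB_Icc hij, intE_Icc hij]; exact hij

lemma one_le_intB (h : IsInterval n K) : 1 ≤ intB K := by
  obtain ⟨i, j, hi, hij, -, rfl⟩ := h
  rw [intB_Icc hij]; exact hi

lemma intE_le (h : IsInterval n K) : intE K ≤ n := by
  obtain ⟨i, j, -, hij, hj, rfl⟩ := h
  rw [intE_Icc hij]; exact hj

lemma not_adjacent_self (h : IsInterval n K) : ¬ Adjacent K K := by
  have := h.intB_le_intE
  rintro (h | h) <;> omega

lemma inter_eq_Icc (hK : IsInterval n K) (hL : IsInterval n L) :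
    K ∩ L = Set.Icc (max (intB K) (intB L)) (min (intE K) (intE L)) := by
  conv_lhs => rw [hK.eq_Icc, hL.eq_Icc]
  exact Set.Icc_inter_Icc

end IsInterval

lemma adjacent_comm {K L : Set ℕ} : Adjacent K L ↔ Adjacent L K := Or.comm

lemma AdjAvoiding.union_singleton {J : Set (Set ℕ)} {K : Set ℕ} (hJ : AdjAvoiding J)
    (hKK : ¬ Adjacent K K) (hKJ : ∀ M ∈ J, ¬ Adjacent K M) : AdjAvoiding (J ∪ {K}) := by
  rintro A (hA | rfl) B (hB | rfl)
  · exact hJ A hA B hB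
  · exact fun h => hKJ A hA (adjacent_comm.mp h)
  · exact hKJ B hB
  · exact hKK

section Maximal

variable {n : ℕ} {J : Set (Set ℕ)}

lemma mem_of_forall_not_adjacent (hJ : AdjAvoiding J)
    (hmax : ∀ K : Set ℕ, IsInterval n K → K ∉ J → ¬ AdjAvoiding (J ∪ {K}))
    {K : Set ℕ} (hK : IsInterval n K) (hKJ : ∀ M ∈ J, ¬ Adjacent K M) : K ∈ J :=
  by_contra fun hnot => hmax K hK hnot (hJ.union_singleton hK.not_adjacent_self hKJ)

lemma Icc_one_mem (hn : 1 ≤ n) (hJint : ∀ K ∈ J, IsInterval n K) (hJ : AdjAvoiding J)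
    (hmax : ∀ K : Set ℕ, IsInterval n K → K ∉ J → ¬ AdjAvoiding (J ∪ {K})) :
    Set.Icc 1 n ∈ J := by
  refine mem_of_forall_not_adjacent hJ hmax ⟨1, n, le_rfl, hn, le_rfl, rfl⟩ fun M hM => ?_
  have := (hJint M hM).one_le_intB
  have := (hJint M hM).intB_le_intE
  have := (hJint M hM).intE_le
  rw [Adjacent, intB_Icc hn, intE_Icc hn]
  omega

lemma Icc_intB_intE_mem (hJint : ∀ K ∈ J, IsInterval n K) (hJ : AdjAvoiding J)
    (hmax : ∀ K : Set ℕ, IsInterval n K → K ∉ J → ¬ AdjAvoiding (J ∪ {K}))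
    {K L : Set ℕ} (hK : K ∈ J) (hL : L ∈ J) (hle : intB K ≤ intE L) :
    Set.Icc (intB K) (intE L) ∈ J := by
  have hint : IsInterval n (Set.Icc (intB K) (intE L)) :=
    ⟨_, _, (hJint K hK).one_le_intB, hle, (hJint L hL).intE_le, rfl⟩
  refine mem_of_forall_not_adjacent hJ hmax hint fun M hM => ?_
  rw [Adjacent, intB_Icc hle, intE_Icc hle]
  rintro (h | h)
  · exact hJ K hK M hM (Or.inl h)
  · exact hJ M hM L hL (Or.inl h)

lemma inter_mem (hJint : ∀ K ∈ J, IsInterval n K) (hJ : AdjAvoiding J)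
    (hmax : ∀ K : Set ℕ, IsInterval n K → K ∉ J → ¬ AdjAvoiding (J ∪ {K}))
    {K L : Set ℕ} (hK : K ∈ J) (hL : L ∈ J) (hne : (K ∩ L).Nonempty) : K ∩ L ∈ J := by
  rw [(hJint K hK).inter_eq_Icc (hJint L hL)] at hne ⊢
  have hle := Set.nonempty_Icc.mp hne
  have mem := fun {A B} (hA : A ∈ J) (hB : B ∈ J) => Icc_intB_intE_mem hJint hJ hmax hA hB
  rcases max_choice (intB K) (intB L) with hb | hb <;>
    rcases min_choice (intE K) (intE L) with he | he <;>
    rw [hb, he] at hle ⊢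
  exacts [mem hK hK hle, mem hK hL hle, mem hL hK hle, mem hL hL hle]

end Maximal

/-- Properties of a maximal (for inclusion) adjacency-avoiding subset `J` of `I_n`:
(i) `⟦1,n⟧ ∈ J`; (ii) if `K, L ∈ J` with `b(K) ≤ e(L)` then `⟦b(K), e(L)⟧ ∈ J`;
(iii) if `K, L ∈ J` intersect then `K ∩ L ∈ J`. -/
theorem maximal_adjAvoiding_closure (n : ℕ) (hn : 1 ≤ n) (J : Set (Set ℕ))
    (hJint : ∀ K ∈ J, IsInterval n K)
    (hJ : AdjAvoiding J)
    (hmax : ∀ K : Set ℕ, IsInterval n K → K ∉ J → ¬ AdjAvoiding (J ∪ {K})) :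
    Set.Icc 1 n ∈ J ∧
      (∀ K ∈ J, ∀ L ∈ J, intB K ≤ intE L → Set.Icc (intB K) (intE L) ∈ J) ∧
      (∀ K ∈ J, ∀ L ∈ J, (K ∩ L).Nonempty → K ∩ L ∈ J) :=
  ⟨Icc_one_mem hn hJint hJ hmax,
    fun _ hK _ hL => Icc_intB_intE_mem hJint hJ hmax hK hL,
    fun _ hK _ hL => inter_mem hJint hJ hmax hK hL⟩
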